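/- Let Σ = {a, b} with a I b, and let L = ⟦(ab)✶(a✶ + b✶)⟧. Then [L] = Σ* (in particular [L] is regular), but for every N ∈ ℕ, L does not have rank at most N; i.e., L is a regular language whose trace closure is regular but which has no rank. -/

import Mathlib

open RegularExpression
open scoped Classical

universe u

variable {α : Type u}

/-- Two words are independent if every letter of the first is independent
of every letter of the second. -/
def WIndep (I : α → α → Prop) (u v : List α) : Prop :=
  ∀ a ∈ u, ∀ b ∈ v, I a b

/-- Trace equivalence: the least equivalence relation on words containing
all pairs (x ++ [a,b] ++ y, x ++ [b,a] ++ y) with a I b. -/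
inductive TrEq (I : α → α → Prop) : List α → List α → Prop
  | swap (x y : List α) {a b : α} : I a b → TrEq I (x ++ [a, b] ++ y) (x ++ [b, a] ++ y)
  | refl (u : List α) : TrEq I u u
  | symm {u v : List α} : TrEq I u v → TrEq I v u
  | trans {u v w : List α} : TrEq I u v → TrEq I v w → TrEq I u w

/-- Trace closure of a language. -/
def TrClosure (I : α → α → Prop) (L : Set (List α)) : Set (List α) :=
  {w | ∃ z ∈ L, TrEq I w z}

/-- u ⊲ z ⊳ v with exactly n blocks of u: there are nonempty words u₁,…,uₙ and
words v₀,…,vₙ (with v₁,…,v_{n-1} nonempty) such that u = u₁⋯uₙ, v = v₀⋯vₙ,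
z = v₀u₁v₁⋯uₙvₙ and vⱼ I uᵢ whenever j < i. -/
def ScatN (I : α → α → Prop) (n : ℕ) (u z v : List α) : Prop :=
  ∃ us vs : ℕ → List α,
    (∀ i, 1 ≤ i → i ≤ n → us i ≠ []) ∧
    (∀ j, 1 ≤ j → j ≤ n - 1 → vs j ≠ []) ∧
    u = ((List.range n).map (fun i => us (i + 1))).flatten ∧
    v = ((List.range (n + 1)).map vs).flatten ∧
    z = vs 0 ++ ((List.range n).map (fun i => us (i + 1) ++ vs (i + 1))).flatten ∧
    (∀ i j, 1 ≤ i → i ≤ n → j < i → WIndep I (vs j) (us i))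

/-- u ⊲ z ⊳ v -/
def Scat (I : α → α → Prop) (u z v : List α) : Prop :=
  ∃ n, ScatN I n u z v

/-- u ∼⊲ z ⊳ v -/
def EqScat (I : α → α → Prop) (u z v : List α) : Prop :=
  ∃ u', TrEq I u u' ∧ Scat I u' z v

/-- u ∼⊲ z ⊳∼ v -/
def EqScatEq (I : α → α → Prop) (u z v : List α) : Prop :=
  ∃ u' v', TrEq I u u' ∧ Scat I u' z v' ∧ TrEq I v' v

/-- u ∼⊲_N z ⊳∼ v : as EqScatEq, with the number of blocks bounded by N -/
def EqScatEqLe (I : α → α → Prop) (N : ℕ) (u z v : List α) : Prop :=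
  ∃ u' v', TrEq I u u' ∧ (∃ n ≤ N, ScatN I n u' z v') ∧ TrEq I v' v

/-- Reordering concatenation of words. -/
def rconc (I : α → α → Prop) : List α → List α → Set (List α)
  | [], v => {v}
  | a :: u, [] => {a :: u}
  | a :: u, b :: v =>
      (List.cons a) '' rconc I u (b :: v) ∪
      {z | WIndep I (a :: u) [b] ∧ ∃ w ∈ rconc I (a :: u) v, z = b :: w}
termination_by u v => u.length + v.length

/-- Reordering concatenation lifted to languages. -/
def rconcL (I : α → α → Prop) (L L' : Set (List α)) : Set (List α) :=
  {z | ∃ u ∈ L, ∃ v ∈ L', z ∈ rconc I u v}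

/-- The reorderable part of a language w.r.t. a word. -/
def RPart (I : α → α → Prop) (u : List α) (L : Set (List α)) : Set (List α) :=
  {v ∈ L | WIndep I v u}

/-- The reordering derivative of a language along a word. -/
def RDeriv (I : α → α → Prop) (u : List α) (L : Set (List α)) : Set (List α) :=
  {v | ∃ z ∈ L, EqScat I u z v}

/-- Syntactic reorderable part of a regexp w.r.t. a letter. -/
noncomputable def Rexp (I : α → α → Prop) (a : α) : RegularExpression α → RegularExpression α
  | zero => zero
  | epsilon => epsilon
  | char b => if I a b then char b else zero
  | plus E F => plus (Rexp I a E) (Rexp I a F)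
  | comp E F => comp (Rexp I a E) (Rexp I a F)
  | RegularExpression.star E => star (Rexp I a E)

/-- Brzozowski reordering derivative of a regexp along a letter. -/
noncomputable def Dexp (I : α → α → Prop) (a : α) : RegularExpression α → RegularExpression α
  | zero => zero
  | epsilon => zero
  | char b => if a = b then epsilon else zero
  | plus E F => plus (Dexp I a E) (Dexp I a F)
  | comp E F => plus (comp (Dexp I a E) F) (comp (Rexp I a E) (Dexp I a F))
  | RegularExpression.star E => comp (star (Rexp I a E)) (comp (Dexp I a E) (star E))

/-- Syntactic reorderable part along a word. -/
noncomputable def RexpW (I : α → α → Prop) (u : List α) (E : RegularExpression α) :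
    RegularExpression α :=
  u.foldl (fun E a => Rexp I a E) E

/-- Brzozowski reordering derivative along a word. -/
noncomputable def DexpW (I : α → α → Prop) (u : List α) (E : RegularExpression α) :
    RegularExpression α :=
  u.foldl (fun E a => Dexp I a E) E

/-- Antimirov reordering parts-of-derivatives along a letter. -/
inductive Antim (I : α → α → Prop) : RegularExpression α → α → RegularExpression α → Prop
  | chr (a : α) : Antim I (char a) a epsilon
  | plusL {E F : RegularExpression α} {a E'} : Antim I E a E' → Antim I (plus E F) a E'
  | plusR {E F : RegularExpression α} {a F'} : Antim I F a F' → Antim I (plus E F) a F'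
  | compL {E F : RegularExpression α} {a E'} : Antim I E a E' → Antim I (comp E F) a (comp E' F)
  | compR {E F : RegularExpression α} {a F'} :
      Antim I F a F' → Antim I (comp E F) a (comp (Rexp I a E) F')
  | st {E : RegularExpression α} {a E'} :
      Antim I E a E' → Antim I (star E) a (comp (star (Rexp I a E)) (comp E' (star E)))

/-- Antimirov reordering parts-of-derivatives along a word. -/
inductive AntimW (I : α → α → Prop) : RegularExpression α → List α → RegularExpression α → Prop
  | nil (E : RegularExpression α) : AntimW I E [] E
  | snoc {E : RegularExpression α} {u E' a E''} :
      AntimW I E u E' → Antim I E' a E'' → AntimW I E (u ++ [a]) E''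

/-- The dependence graph of a word: vertices are positions; distinct positions
are adjacent when their letters are not independent. -/
def depGraph (I : α → α → Prop) (w : List α) : SimpleGraph (Fin w.length) where
  Adj i j := i ≠ j ∧ ¬(I (w.get i) (w.get j) ∧ I (w.get j) (w.get i))
  symm := by
    constructor
    intro i j h
    exact ⟨h.1.symm, fun hc => h.2 ⟨hc.2, hc.1⟩⟩
  loopless := by
    constructor
    intro i h
    exact h.1 rfl

/-- A word is connected if its dependence graph is connected. -/
def WordConnected (I : α → α → Prop) (w : List α) : Prop :=
  (depGraph I w).Preconnected

/-- Least fixed point star for the trace-closing semantics. -/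
def starI (I : α → α → Prop) (L : Set (List α)) : Set (List α) :=
  sInf {X | {([] : List α)} ∪ rconcL I L X ⊆ X}

/-- Trace-closing semantics of regular expressions. -/
def langI (I : α → α → Prop) : RegularExpression α → Set (List α)
  | zero => ∅
  | epsilon => {[]}
  | char a => {[a]}
  | plus E F => langI I E ∪ langI I F
  | comp E F => rconcL I (langI I E) (langI I F)
  | RegularExpression.star E => starI I (langI I E)

/-- L has (scattering) rank at most N. -/
def HasRankLe (I : α → α → Prop) (L : Set (List α)) (N : ℕ) : Prop :=
  ∀ u v, u ++ v ∈ TrClosure I L → ∃ z ∈ L, EqScatEqLe I N u z v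

/-- L has uniform (scattering) rank at most N. -/
def HasUniformRankLe (I : α → α → Prop) (L : Set (List α)) (N : ℕ) : Prop :=
  ∀ w ∈ TrClosure I L, ∃ z ∈ L, ∀ u v, w = u ++ v → EqScatEqLe I N u z v

/-- Star-connected regular expressions. -/
inductive StarConnected (I : α → α → Prop) : RegularExpression α → Prop
  | zero : StarConnected I zero
  | epsilon : StarConnected I epsilon
  | chr (a : α) : StarConnected I (char a)
  | plus {E F : RegularExpression α} :
      StarConnected I E → StarConnected I F → StarConnected I (plus E F)
  | comp {E F : RegularExpression α} :
      StarConnected I E → StarConnected I F → StarConnected I (comp E F)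
  | st {E : RegularExpression α} :
      StarConnected I E → (∀ w ∈ E.matches', WordConnected I w) → StarConnected I (star E)

/-- Refined Antimirov reordering parts-of-derivatives along a letter. -/
inductive RAntim (I : α → α → Prop) :
    RegularExpression α → α → RegularExpression α → RegularExpression α → Prop
  | chr (a : α) : RAntim I (char a) a epsilon epsilon
  | plusL {E F : RegularExpression α} {a El Er} :
      RAntim I E a El Er → RAntim I (plus E F) a El Er
  | plusR {E F : RegularExpression α} {a Fl Fr} :
      RAntim I F a Fl Fr → RAntim I (plus E F) a Fl Fr
  | compL {E F : RegularExpression α} {a El Er} :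
      RAntim I E a El Er → RAntim I (comp E F) a El (comp Er F)
  | compR {E F : RegularExpression α} {a Fl Fr} :
      RAntim I F a Fl Fr → RAntim I (comp E F) a (comp (Rexp I a E) Fl) Fr
  | st {E : RegularExpression α} {a El Er} :
      RAntim I E a El Er →
      RAntim I (star E) a (comp (star (Rexp I a E)) El) (comp Er (star E))

/-- Refined Antimirov relation lifted to nonempty lists of regexps (unbounded). -/
inductive RAntimL (I : α → α → Prop) :
    List (RegularExpression α) → α → List (RegularExpression α) → Prop
  | split {Γ Δ : List (RegularExpression α)} {E : RegularExpression α} {a El Er} :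
      RAntim I E a El Er →
      RAntimL I (Γ ++ E :: Δ) a (Γ.map (Rexp I a) ++ El :: Er :: Δ)
  | dropL {Γ Δ : List (RegularExpression α)} {E : RegularExpression α} {a El Er} :
      RAntim I E a El Er → [] ∈ El.matches' → Γ ≠ [] →
      RAntimL I (Γ ++ E :: Δ) a (Γ.map (Rexp I a) ++ Er :: Δ)
  | dropR {Γ Δ : List (RegularExpression α)} {E : RegularExpression α} {a El Er} :
      RAntim I E a El Er → [] ∈ Er.matches' → Δ ≠ [] →
      RAntimL I (Γ ++ E :: Δ) a (Γ.map (Rexp I a) ++ El :: Δ)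
  | dropBoth {Γ Δ : List (RegularExpression α)} {E : RegularExpression α} {a El Er} :
      RAntim I E a El Er → [] ∈ El.matches' → [] ∈ Er.matches' → Γ ≠ [] → Δ ≠ [] →
      RAntimL I (Γ ++ E :: Δ) a (Γ.map (Rexp I a) ++ Δ)

/-- Refined Antimirov relation along a word (unbounded). -/
inductive RAntimW (I : α → α → Prop) :
    RegularExpression α → List α → List (RegularExpression α) → Prop
  | nil (E : RegularExpression α) : RAntimW I E [] [E]
  | snoc {E : RegularExpression α} {u Γ a Γ'} :
      RAntimW I E u Γ → RAntimL I Γ a Γ' → RAntimW I E (u ++ [a]) Γ'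

/-- N-bounded refined Antimirov relation lifted to nonempty lists of regexps. -/
inductive RAntimLN (I : α → α → Prop) (N : ℕ) :
    List (RegularExpression α) → α → List (RegularExpression α) → Prop
  | split {Γ Δ : List (RegularExpression α)} {E : RegularExpression α} {a El Er} :
      RAntim I E a El Er → Γ.length + Δ.length < N →
      RAntimLN I N (Γ ++ E :: Δ) a (Γ.map (Rexp I a) ++ El :: Er :: Δ)
  | dropL {Γ Δ : List (RegularExpression α)} {E : RegularExpression α} {a El Er} :
      RAntim I E a El Er → [] ∈ El.matches' → Γ ≠ [] →
      RAntimLN I N (Γ ++ E :: Δ) a (Γ.map (Rexp I a) ++ Er :: Δ)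
  | dropR {Γ Δ : List (RegularExpression α)} {E : RegularExpression α} {a El Er} :
      RAntim I E a El Er → [] ∈ Er.matches' → Δ ≠ [] →
      RAntimLN I N (Γ ++ E :: Δ) a (Γ.map (Rexp I a) ++ El :: Δ)
  | dropBoth {Γ Δ : List (RegularExpression α)} {E : RegularExpression α} {a El Er} :
      RAntim I E a El Er → [] ∈ El.matches' → [] ∈ Er.matches' → Γ ≠ [] → Δ ≠ [] →
      RAntimLN I N (Γ ++ E :: Δ) a (Γ.map (Rexp I a) ++ Δ)

/-- N-bounded refined Antimirov relation along a word. -/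
inductive RAntimWN (I : α → α → Prop) (N : ℕ) :
    RegularExpression α → List α → List (RegularExpression α) → Prop
  | nil (E : RegularExpression α) : RAntimWN I N E [] [E]
  | snoc {E : RegularExpression α} {u Γ a Γ'} :
      RAntimWN I N E u Γ → RAntimLN I N Γ a Γ' → RAntimWN I N E (u ++ [a]) Γ'

/-! When all distinct letters commute, trace equivalence is just permutation, and every word over
`{a, b}` is a permutation of `(ab)ᵏ aʳ` or `(ab)ᵏ bʳ`, so `[L] = Σ*`. For the rank, split
`aᴹ bᴹ` with `M > N` as `u = aᴹ`, `v = bᴹ`. A witness `z ∈ L` for `u ∼⊲_N z ⊳∼ v` cuts `aᴹ` into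
at most `N` blocks, so some block contains `aa`, which then occurs in `z`; but `z`, having as many
`a`s as `b`s, is `(ab)ᴹ`, which does not contain `aa`. -/

section TraceEquivalence

variable {I : α → α → Prop}

theorem TrEq.perm {u v : List α} (h : TrEq I u v) : u.Perm v := by
  induction h with
  | swap x y => simpa using (List.Perm.swap _ _ y).append_left x
  | refl u => exact .refl u
  | symm _ ih => exact ih.symm
  | trans _ _ ih₁ ih₂ => exact ih₁.trans ih₂

theorem TrEq.cons (c : α) {u v : List α} (h : TrEq I u v) : TrEq I (c :: u) (c :: v) := by
  induction h with
  | swap x y hab => exact .swap (c :: x) y hab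
  | refl u => exact .refl _
  | symm _ ih => exact ih.symm
  | trans _ _ ih₁ ih₂ => exact ih₁.trans ih₂

theorem TrEq.of_perm (hI : ∀ a b, a ≠ b → I a b) {u v : List α} (h : u.Perm v) :
    TrEq I u v := by
  induction h with
  | nil => exact .refl _
  | cons x _ ih => exact ih.cons x
  | swap x y l =>
    by_cases hxy : x = y
    · subst hxy
      exact .refl _
    · simpa using TrEq.swap (I := I) [] l (hI y x (Ne.symm hxy))
  | trans _ _ ih₁ ih₂ => exact ih₁.trans ih₂

theorem trClosure_eq_univ (hI : ∀ a b, a ≠ b → I a b) {L : Set (List α)}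
    (hL : ∀ w : List α, ∃ z ∈ L, w.Perm z) : TrClosure I L = Set.univ :=
  Set.eq_univ_of_forall fun w =>
    let ⟨z, hz, hwz⟩ := hL w
    ⟨z, hz, TrEq.of_perm hI hwz⟩

end TraceEquivalence

theorem List.exists_mem_two_le_length_of_length_lt {L : List (List α)}
    (h : L.length < L.flatten.length) : ∃ x ∈ L, 2 ≤ x.length := by
  by_contra! hL
  have : (L.map List.length).sum ≤ (L.map List.length).length • 1 :=
    List.sum_le_card_nsmul _ _ (by simpa using fun x hx => Nat.le_of_lt_succ (hL x hx))
  simp only [List.length_map, smul_eq_mul, mul_one, ← List.length_flatten] at this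
  omega

namespace ScatN

variable {I : α → α → Prop} {n : ℕ} {u z v : List α}

theorem perm (h : ScatN I n u z v) : z.Perm (u ++ v) := by
  obtain ⟨us, vs, -, -, rfl, rfl, rfl, -⟩ := h
  rw [List.perm_iff_count]
  intro a
  simp only [List.count_append, List.count_flatten, List.map_map, Function.comp_def,
    List.range_succ_eq_map, List.map_cons, List.sum_cons, List.sum_map_add, Nat.succ_eq_add_one]
  omega

theorem exists_pair_infix (h : ScatN I n u z v) (hn : n < u.length) :
    ∃ a b, [a, b] <:+: u ∧ [a, b] <:+: z := by
  obtain ⟨us, vs, -, -, rfl, -, rfl, -⟩ := h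
  obtain ⟨x, hx, hx2⟩ := List.exists_mem_two_le_length_of_length_lt
    (L := (List.range n).map fun i => us (i + 1)) (by simpa using hn)
  obtain ⟨i, hi, rfl⟩ := List.mem_map.mp hx
  obtain ⟨a, b, t, hab⟩ : ∃ a b t, us (i + 1) = a :: b :: t := by
    match us (i + 1), hx2 with
    | a :: b :: t, _ => exact ⟨a, b, t, rfl⟩
  have hpair : [a, b] <:+: us (i + 1) := hab ▸ (List.prefix_append [a, b] t).isInfix
  refine ⟨a, b, hpair.trans (List.infix_of_mem_flatten hx), hpair.trans ?_⟩
  have hblock : us (i + 1) ++ vs (i + 1) ∈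
      (List.range n).map (fun j => us (j + 1) ++ vs (j + 1)) := List.mem_map.mpr ⟨i, hi, rfl⟩
  exact (List.prefix_append _ _).isInfix.trans
    ((List.infix_of_mem_flatten hblock).trans (List.suffix_append _ _).isInfix)

end ScatN

theorem Language.mem_kstar_singleton_iff {w x : List α} :
    x ∈ KStar.kstar ({w} : Language α) ↔ ∃ k, x = (List.replicate k w).flatten := by
  constructor
  · rintro ⟨S, rfl, hS⟩
    exact ⟨S.length, congrArg List.flatten (List.eq_replicate_of_mem hS)⟩
  · rintro ⟨k, rfl⟩
    exact ⟨_, rfl, fun y hy => List.eq_of_mem_replicate hy⟩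

/-- The expression `(ab)✶(a✶ + b✶)`, with `a = false` and `b = true`. -/
def abStarAStarPlusBStar : RegularExpression Bool :=
  comp (RegularExpression.star (comp (char false) (char true)))
    (plus (RegularExpression.star (char false)) (RegularExpression.star (char true)))

theorem mem_abStarAStarPlusBStar_iff {z : List Bool} :
    z ∈ abStarAStarPlusBStar.matches' ↔
      ∃ k r c, z = (List.replicate k [false, true]).flatten ++ List.replicate r c := by
  have hab : ({[false]} * {[true]} : Language Bool) = {[false, true]} := by
    ext x
    constructor
    · rintro ⟨_, rfl, _, rfl, rfl⟩
      rfl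
    · rintro rfl
      exact ⟨[false], rfl, [true], rfl, rfl⟩
  simp only [abStarAStarPlusBStar, matches', hab, Language.mem_mul, Language.mem_add,
    Language.mem_kstar_singleton_iff, List.flatten_replicate_singleton]
  constructor
  · rintro ⟨_, ⟨k, rfl⟩, _, ⟨r, rfl⟩ | ⟨r, rfl⟩, rfl⟩
    exacts [⟨k, r, false, rfl⟩, ⟨k, r, true, rfl⟩]
  · rintro ⟨k, r, c, rfl⟩
    refine ⟨_, ⟨k, rfl⟩, _, ?_, rfl⟩
    cases c
    exacts [.inl ⟨r, rfl⟩, .inr ⟨r, rfl⟩]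

theorem count_flatten_replicate_append_replicate (k r : ℕ) (c d : Bool) :
    ((List.replicate k [false, true]).flatten ++ List.replicate r c).count d =
      k + if c = d then r else 0 := by
  cases c <;> cases d <;> simp [List.count_flatten, List.count_replicate]

theorem exists_perm_mem_abStarAStarPlusBStar (w : List Bool) :
    ∃ z ∈ abStarAStarPlusBStar.matches', w.Perm z := by
  rcases le_total (w.count true) (w.count false) with h | h
  · refine ⟨_, mem_abStarAStarPlusBStar_iff.mpr ⟨w.count true, w.count false - w.count true,
      false, rfl⟩, List.perm_iff_count.mpr fun d => ?_⟩
    rw [count_flatten_replicate_append_replicate]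
    cases d <;> simp [Nat.add_sub_cancel' h]
  · refine ⟨_, mem_abStarAStarPlusBStar_iff.mpr ⟨w.count false, w.count true - w.count false,
      true, rfl⟩, List.perm_iff_count.mpr fun d => ?_⟩
    rw [count_flatten_replicate_append_replicate]
    cases d <;> simp [Nat.add_sub_cancel' h]

theorem exists_eq_flatten_replicate_of_mem_abStarAStarPlusBStar {z : List Bool}
    (hz : z ∈ abStarAStarPlusBStar.matches') (hc : z.count false = z.count true) :
    ∃ k, z = (List.replicate k [false, true]).flatten := by
  obtain ⟨k, r, c, rfl⟩ := mem_abStarAStarPlusBStar_iff.mp hz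
  have hr : r = 0 := by
    simp only [count_flatten_replicate_append_replicate] at hc
    cases c <;> simp at hc <;> omega
  exact ⟨k, by simp [hr]⟩

theorem isChain_ne_flatten_replicate :
    ∀ k, (List.replicate k [false, true]).flatten.IsChain (· ≠ ·)
  | 0 => .nil
  | 1 => by simp
  | k + 2 => by
    have := isChain_ne_flatten_replicate (k + 1)
    simp_all [List.replicate_succ]

theorem not_infix_flatten_replicate (k : ℕ) :
    ¬ [false, false] <:+: (List.replicate k [false, true]).flatten := fun h => by
  simpa using (isChain_ne_flatten_replicate k).infix h

theorem Language.isRegular_top : (⊤ : Language α).IsRegular :=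
  ⟨Unit, inferInstance, ⟨fun _ _ => (), (), Set.univ⟩, Set.eq_univ_of_forall fun _ => trivial⟩

theorem stmt12 (I : Bool → Bool → Prop) (hI : ∀ x y, I x y ↔ x ≠ y)
    (E : RegularExpression Bool)
    (hE : E = comp (RegularExpression.star (comp (char false) (char true)))
        (plus (RegularExpression.star (char false)) (RegularExpression.star (char true)))) :
    TrClosure I E.matches' = Set.univ ∧
    Language.IsRegular (TrClosure I E.matches' : Language Bool) ∧
    ∀ N : ℕ, ¬ HasRankLe I E.matches' N := by
  obtain rfl : E = abStarAStarPlusBStar := hE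
  have hclosure : TrClosure I abStarAStarPlusBStar.matches' = Set.univ :=
    trClosure_eq_univ (fun a b => (hI a b).mpr) exists_perm_mem_abStarAStarPlusBStar
  refine ⟨hclosure, hclosure ▸ Language.isRegular_top, fun N hN => ?_⟩
  obtain ⟨z, hz, u, v, hu, ⟨n, hn, hscat⟩, hv⟩ :=
    hN (List.replicate (N + 1) false) (List.replicate (N + 1) true) (hclosure ▸ trivial)
  rw [List.perm_replicate.mp hu.perm.symm, List.perm_replicate.mp hv.perm] at hscat
  have hcount : z.count false = z.count true := by
    simp [List.perm_iff_count.mp hscat.perm, List.count_replicate]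
  obtain ⟨k, rfl⟩ := exists_eq_flatten_replicate_of_mem_abStarAStarPlusBStar hz hcount
  obtain ⟨a, b, hab, habz⟩ := hscat.exists_pair_infix (by simpa using Nat.lt_succ_of_le hn)
  obtain rfl : a = false := List.eq_of_mem_replicate (hab.subset (by simp))
  obtain rfl : b = false := List.eq_of_mem_replicate (hab.subset (by simp))
  exact not_infix_flatten_replicate k habz
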